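/- Let p be a prime and let n ≥ k be natural numbers. Then, in ℚ_p, the sequence N ↦ (1/p^N) · ∑_{x=0}^{p^N − 1} C(n,k) x^k (1 − x)^{n−k} tends (as N → ∞) to the rational number C(n,k) · ∑_{j=0}^{k} C(k, j) (−1)^{k−j} · ∑_{l=0}^{n−j} C(n−j, l) (−1)^l B_l, cast into ℚ_p. (Equivalently, ∫_{ℤ_p} B_{k,n}(x) dμ₁(x) = ∫_{ℤ_p} B_{n−k,n}(1−x) dμ₁(x) = C(n,k) ∑_{j=0}^{k} C(k,j)(−1)^{k−j} ∑_{l=0}^{n−j} C(n−j,l)(−1)^l B_l.) -/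

import Mathlib

/-!
By Faulhaber's formula, `p^{-N} ∑_{x < p^N} x^m` is a polynomial in `p^N` whose constant term is
`B_m`; since `p^N → 0` in `ℚ_p`, the Volkenborn integral of `x^m` is `B_m`. Writing
`x = 1 - (1 - x)` gives `x^k (1 - x)^{n-k} = ∑_j C(k,j) (-1)^{k-j} (1 - x)^{n-j}`, and expanding each
`(1 - x)^{n-j}` binomially turns the Bernstein polynomial into a combination of monomials, to which
the linearity of the Volkenborn sums applies.
-/

open Finset Filter Topology

noncomputable def volkenbornSum (p : ℕ) [Fact p.Prime] (f : ℕ → ℚ_[p]) (N : ℕ) : ℚ_[p] :=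
  (1 / (p : ℚ_[p]) ^ N) * ∑ x ∈ range (p ^ N), f x

section Linearity

variable {p : ℕ} [Fact p.Prime]

lemma volkenbornSum_const_mul (c : ℚ_[p]) (f : ℕ → ℚ_[p]) (N : ℕ) :
    volkenbornSum p (fun x => c * f x) N = c * volkenbornSum p f N := by
  simp only [volkenbornSum, ← mul_sum]
  ring

lemma volkenbornSum_sum {ι : Type*} (s : Finset ι) (f : ι → ℕ → ℚ_[p]) (N : ℕ) :
    volkenbornSum p (fun x => ∑ i ∈ s, f i x) N = ∑ i ∈ s, volkenbornSum p (f i) N := by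
  simp only [volkenbornSum, mul_sum]
  exact sum_comm

lemma tendsto_volkenbornSum_const_mul {f : ℕ → ℚ_[p]} {a : ℚ_[p]} (c : ℚ_[p])
    (h : Tendsto (volkenbornSum p f) atTop (𝓝 a)) :
    Tendsto (volkenbornSum p fun x => c * f x) atTop (𝓝 (c * a)) := by
  rw [funext (volkenbornSum_const_mul c f)]
  exact h.const_mul c

lemma tendsto_volkenbornSum_sum {ι : Type*} (s : Finset ι) {f : ι → ℕ → ℚ_[p]} {a : ι → ℚ_[p]}
    (h : ∀ i ∈ s, Tendsto (volkenbornSum p (f i)) atTop (𝓝 (a i))) :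
    Tendsto (volkenbornSum p fun x => ∑ i ∈ s, f i x) atTop (𝓝 (∑ i ∈ s, a i)) := by
  rw [funext (volkenbornSum_sum s f)]
  exact tendsto_finsetSum s h

end Linearity

def faulhaberCoeff (m i : ℕ) : ℚ :=
  bernoulli i * (m + 1).choose i / (m + 1)

lemma faulhaberCoeff_self (m : ℕ) : faulhaberCoeff m m = bernoulli m := by
  have hm : (m : ℚ) + 1 ≠ 0 := Nat.cast_add_one_ne_zero m
  rw [faulhaberCoeff, Nat.choose_succ_self_right]
  push_cast
  rw [mul_div_assoc, div_self hm, mul_one]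

lemma sum_range_pow_eq_mul_sum_faulhaberCoeff (n m : ℕ) :
    ∑ x ∈ range n, (x : ℚ) ^ m = n * ∑ i ∈ range (m + 1), faulhaberCoeff m i * (n : ℚ) ^ (m - i) := by
  rw [sum_range_pow, mul_sum]
  refine sum_congr rfl fun i hi => ?_
  rw [faulhaberCoeff, show m + 1 - i = m - i + 1 by have := mem_range.mp hi; omega, pow_succ]
  ring

lemma volkenbornSum_pow (p : ℕ) [Fact p.Prime] (m N : ℕ) :
    volkenbornSum p (fun x => (x : ℚ_[p]) ^ m) N =
      ∑ i ∈ range (m + 1), (faulhaberCoeff m i : ℚ_[p]) * ((p : ℚ_[p]) ^ N) ^ (m - i) := by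
  have hpN : (p : ℚ_[p]) ^ N ≠ 0 := pow_ne_zero _ (Nat.cast_ne_zero.mpr (Fact.out : p.Prime).ne_zero)
  have faulhaber :=
    congrArg (Rat.cast : ℚ → ℚ_[p]) (sum_range_pow_eq_mul_sum_faulhaberCoeff (p ^ N) m)
  push_cast at faulhaber
  rw [volkenbornSum, faulhaber, ← mul_assoc, one_div_mul_cancel hpN, one_mul]

theorem tendsto_volkenbornSum_pow (p : ℕ) [Fact p.Prime] (m : ℕ) :
    Tendsto (volkenbornSum p fun x => (x : ℚ_[p]) ^ m) atTop (𝓝 (bernoulli m : ℚ_[p])) := by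
  have hpN : Tendsto (fun N => (p : ℚ_[p]) ^ N) atTop (𝓝 0) :=
    tendsto_pow_atTop_nhds_zero_of_norm_lt_one Padic.norm_p_lt_one
  have hlim : Tendsto (volkenbornSum p fun x => (x : ℚ_[p]) ^ m) atTop
      (𝓝 (∑ i ∈ range (m + 1), (faulhaberCoeff m i : ℚ_[p]) * 0 ^ (m - i))) := by
    rw [funext (volkenbornSum_pow p m)]
    exact tendsto_finsetSum _ fun i _ => (hpN.pow (m - i)).const_mul _
  rwa [sum_eq_single_of_mem m (self_mem_range_succ m) fun i hi _ => by
    rw [zero_pow (by have := mem_range.mp hi; omega), mul_zero], Nat.sub_self, pow_zero, mul_one,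
    faulhaberCoeff_self] at hlim

lemma one_sub_pow_eq_sum {R : Type*} [CommRing R] (x : R) (m : ℕ) :
    (1 - x) ^ m = ∑ l ∈ range (m + 1), (m.choose l : R) * (-1) ^ l * x ^ l := by
  rw [sub_eq_neg_add, add_pow]
  refine sum_congr rfl fun l _ => ?_
  rw [neg_pow]
  ring

lemma pow_mul_one_sub_pow_eq_sum {R : Type*} [CommRing R] (x : R) {k n : ℕ} (hkn : k ≤ n) :
    x ^ k * (1 - x) ^ (n - k) =
      ∑ j ∈ range (k + 1), (k.choose j : R) * (-1) ^ (k - j) * (1 - x) ^ (n - j) := by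
  conv_lhs => rw [show x = 1 + -(1 - x) by ring, add_pow, sum_mul]
  refine sum_congr rfl fun j hj => ?_
  rw [show n - j = (k - j) + (n - k) by have := mem_range.mp hj; omega, neg_pow, pow_add]
  ring

/-- `∫_{ℤ_p} B_{k,n}(x) dμ₁(x) = C(n,k) ∑_{j=0}^{k} C(k,j)(−1)^{k−j} ∑_{l=0}^{n−j} C(n−j,l)(−1)^l B_l`. -/
theorem volkenborn_bernstein_eq_double_sum_bernoulli (p : ℕ) [Fact p.Prime] (n k : ℕ)
    (hkn : k ≤ n) :
    Filter.Tendsto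
      (fun N : ℕ => (1 / (p : ℚ_[p]) ^ N) *
        ∑ x ∈ Finset.range (p ^ N),
          (n.choose k : ℚ_[p]) * (x : ℚ_[p]) ^ k * (1 - (x : ℚ_[p])) ^ (n - k))
      Filter.atTop
      (nhds (((n.choose k : ℚ) * ∑ j ∈ Finset.range (k + 1),
        (k.choose j : ℚ) * (-1 : ℚ) ^ (k - j) *
          ∑ l ∈ Finset.range (n - j + 1),
            ((n - j).choose l : ℚ) * (-1 : ℚ) ^ l * bernoulli l : ℚ) : ℚ_[p])) := by
  have bernstein_expansion (x : ℚ_[p]) :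
      (n.choose k : ℚ_[p]) * x ^ k * (1 - x) ^ (n - k) =
        n.choose k * ∑ j ∈ range (k + 1), (k.choose j : ℚ_[p]) * (-1) ^ (k - j) *
          ∑ l ∈ range (n - j + 1), ((n - j).choose l : ℚ_[p]) * (-1) ^ l * x ^ l := by
    rw [mul_assoc, pow_mul_one_sub_pow_eq_sum x hkn]
    simp only [one_sub_pow_eq_sum]
  push_cast
  simp only [bernstein_expansion]
  exact tendsto_volkenbornSum_const_mul _ <| tendsto_volkenbornSum_sum _ fun j _ =>
    tendsto_volkenbornSum_const_mul _ <| tendsto_volkenbornSum_sum _ fun l _ =>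
      tendsto_volkenbornSum_const_mul _ (tendsto_volkenbornSum_pow p l)
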